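/- Let G be a finite p-group of order p^n, n ≥ 2, having dense CD-subgroups. Then Z(G) belongs to the Chermak–Delgado lattice CD(G). -/
import Mathlib


open Pointwise

/-- Chermak–Delgado measure of a subgroup. -/
noncomputable def mCD (G : Type*) [Group G] (H : Subgroup G) : ℕ :=
  Nat.card H * Nat.card (Subgroup.centralizer (H : Set G))

/-- Maximal Chermak–Delgado measure. -/
noncomputable def mStar (G : Type*) [Group G] : ℕ :=
  sSup (Set.range (mCD G))

/-- Chermak–Delgado lattice (as a set of subgroups). -/
def CD (G : Type*) [Group G] : Set (Subgroup G) :=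
  {H | mCD G H = mStar G}

/-- A group has dense CD-subgroups if for all subgroups H < K with H not
maximal in K, there exists X in CD(G) with H < X < K. -/
def DenseCD (G : Type*) [Group G] : Prop :=
  ∀ H K : Subgroup G, H < K → (∃ L : Subgroup G, H < L ∧ L < K) →
    ∃ X ∈ CD G, H < X ∧ X < K

lemma mCD_le_mStar (G : Type*) [Group G] [Finite G] (H : Subgroup G) :
    mCD G H ≤ mStar G :=
  le_csSup (Set.finite_range (mCD G)).bddAbove ⟨H, rfl⟩

lemma CD_nonempty (G : Type*) [Group G] [Finite G] : (CD G).Nonempty := by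
  have h : mStar G ∈ Set.range (mCD G) :=
    (Set.range_nonempty (mCD G)).csSup_mem (Set.finite_range _)
  obtain ⟨H, hH⟩ := h
  exact ⟨H, hH⟩

lemma centralizer_sup_center (G : Type*) [Group G] (M : Subgroup G) :
    Subgroup.centralizer ((M ⊔ Subgroup.center G : Subgroup G) : Set G)
      = Subgroup.centralizer (M : Set G) := by
  apply le_antisymm
  · exact Subgroup.centralizer_le (SetLike.coe_subset_coe.mpr le_sup_left)
  · rw [← Subgroup.le_centralizer_iff, sup_le_iff]
    exact ⟨Subgroup.le_centralizer_iff.mp le_rfl,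
      Subgroup.center_le_centralizer _⟩

lemma center_le_of_mem_CD {G : Type*} [Group G] [Finite G] {M : Subgroup G}
    (hM : M ∈ CD G) : Subgroup.center G ≤ M := by
  set N := M ⊔ Subgroup.center G with hN
  have hcent := centralizer_sup_center G M
  have h1 : mCD G N ≤ mCD G M := (mCD_le_mStar G N).trans_eq hM.symm
  unfold mCD at h1
  rw [hcent] at h1
  have hpos : 0 < Nat.card (Subgroup.centralizer (M : Set G)) := Nat.card_pos
  have hle : Nat.card N ≤ Nat.card M := Nat.le_of_mul_le_mul_right h1 hpos
  have : M = N := Subgroup.eq_of_le_of_card_ge le_sup_left hle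
  rw [this]
  exact le_sup_right

theorem stmt16 (G : Type*) [Group G] [Finite G] (p n : ℕ) (hp : p.Prime) (hn : 2 ≤ n)
    (hcard : Nat.card G = p ^ n) (hd : DenseCD G) :
    Subgroup.center G ∈ CD G := by
  -- G is nontrivial
  have hnt : Nontrivial G := by
    rw [← Finite.one_lt_card_iff_nontrivial, hcard]
    exact Nat.one_lt_pow (by omega) hp.one_lt
  -- center is nontrivial
  have : Fact p.Prime := ⟨hp⟩
  have hpG : IsPGroup p G := IsPGroup.of_card hcard
  have hZnt : Nontrivial (Subgroup.center G) := hpG.center_nontrivial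
  have hZbot : (⊥ : Subgroup G) < Subgroup.center G :=
    bot_lt_iff_ne_bot.mpr ((Subgroup.nontrivial_iff_ne_bot _).mp hZnt)
  -- a minimal element of CD G
  obtain ⟨M, hM, hminM⟩ :=
    (Finite.to_wellFoundedLT (α := Subgroup G)).wf.has_min (CD G) (CD_nonempty G)
  have hZM : Subgroup.center G ≤ M := center_le_of_mem_CD hM
  rcases eq_or_lt_of_le hZM with heq | hlt
  · rwa [heq]
  · exfalso
    have hbotM : (⊥ : Subgroup G) < M := hZbot.trans hlt
    obtain ⟨X, hX, _, hXM⟩ := hd ⊥ M hbotM ⟨Subgroup.center G, hZbot, hlt⟩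
    exact hminM X hX hXM
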